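/- Let s be a real number and let A = (r_A, c_A, d_A) and B = (r_B, c_B, d_B) be triples of real numbers with c_A − s·r_A > 0, c_B − s·r_B > 0, and r_A·c_B − r_B·c_A ≠ 0. Then there is at most one t₀ > 0 with μ_{s,t₀}(A) = μ_{s,t₀}(B); i.e. the vertical ray {(s, t) : t > 0} meets the potential wall between A and B in at most one point. -/
import Mathlib


/-- The Bridgeland slope on ℙ² of a triple `(r, c, d)` of real numbers. -/
noncomputable def mu (s t r c d : ℝ) : ℝ :=
  (d - s * c + (s ^ 2 / 2) * r - (t ^ 2 / 2) * r) / (t * (c - s * r))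

/-- If `r_A c_B - r_B c_A ≠ 0`, the vertical ray `{(s, t) : t > 0}` meets the potential
wall between `A` and `B` in at most one point. -/
theorem at_most_one_wall_crossing (s : ℝ) (rA cA dA rB cB dB : ℝ)
    (hA : 0 < cA - s * rA) (hB : 0 < cB - s * rB)
    (h : rA * cB - rB * cA ≠ 0) :
    ∀ t₁ t₂ : ℝ, 0 < t₁ → 0 < t₂ →
      mu s t₁ rA cA dA = mu s t₁ rB cB dB →
      mu s t₂ rA cA dA = mu s t₂ rB cB dB → t₁ = t₂ := by
  intro t₁ t₂ ht₁ ht₂ h1 h2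
  unfold mu at h1 h2
  rw [div_eq_div_iff (by positivity) (by positivity)] at h1 h2
  have e1 : t₁ ≠ 0 := ne_of_gt ht₁
  have e2 : t₂ ≠ 0 := ne_of_gt ht₂
  have g1 : (dA - s * cA + s ^ 2 / 2 * rA - t₁ ^ 2 / 2 * rA) * (cB - s * rB)
      = (dB - s * cB + s ^ 2 / 2 * rB - t₁ ^ 2 / 2 * rB) * (cA - s * rA) :=
    mul_left_cancel₀ e1 (by linear_combination h1)
  have g2 : (dA - s * cA + s ^ 2 / 2 * rA - t₂ ^ 2 / 2 * rA) * (cB - s * rB)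
      = (dB - s * cB + s ^ 2 / 2 * rB - t₂ ^ 2 / 2 * rB) * (cA - s * rA) :=
    mul_left_cancel₀ e2 (by linear_combination h2)
  have key : (rA * cB - rB * cA) * (t₁ ^ 2 - t₂ ^ 2) = 0 := by
    linear_combination 2 * (g2 - g1)
  rcases mul_eq_zero.mp key with h' | h'
  · exact absurd h' h
  · nlinarith
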